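/- Let T be a finite rooted tree in which every node has 0, 1, or 2 children, and suppose a nonempty subset L of the leaves is marked ('observed'). For an observed leaf ℓ, define its observable generation number m̃(ℓ) as the number of ancestors v of ℓ (including possibly the root) such that at least two distinct children of v each have an observed leaf among their descendants. Then the sum over observed leaves ℓ ∈ L of 2^{-m̃(ℓ)} equals 1. -/

import Mathlib

/-- A finite rooted tree in which every node has 0, 1 or 2 children, and each leaf is
either marked as observed (`true`) or not. -/
inductive PTree : Type
  | leaf (obs : Bool) : PTree
  | node1 (c : PTree) : PTree
  | node2 (l r : PTree) : PTree

/-- Whether a tree has at least one observed leaf. -/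
def PTree.hasObs : PTree → Bool
  | .leaf o => o
  | .node1 c => c.hasObs
  | .node2 l r => l.hasObs || r.hasObs

/-- The list of observable generation numbers m̃(ℓ) of the observed leaves: for an observed
leaf ℓ, m̃(ℓ) is the number of ancestors v of ℓ such that at least two distinct children of v
each have an observed leaf among their descendants. -/
def PTree.obsGens : PTree → List ℕ
  | .leaf o => if o then [0] else []
  | .node1 c => c.obsGens
  | .node2 l r =>
      if l.hasObs && r.hasObs then (l.obsGens ++ r.obsGens).map (· + 1)
      else l.obsGens ++ r.obsGens

/-!
Induct on the tree. A subtree without observed leaves contributes nothing, so a node with a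
single observed branch passes that branch's sum through unchanged. At a node where both
branches carry observed leaves, every generation number below it goes up by one, halving each
branch's sum of `2⁻¹ ^ m̃`, and `1/2 + 1/2 = 1`.
-/

theorem PTree.obsGens_eq_nil_of_hasObs_eq_false {t : PTree} (h : t.hasObs = false) :
    t.obsGens = [] := by
  induction t with
  | leaf o => simp_all [PTree.hasObs, PTree.obsGens]
  | node1 c ih => exact ih h
  | node2 l r ihl ihr =>
    simp only [PTree.hasObs, Bool.or_eq_false_iff] at h
    simp [PTree.obsGens, ihl h.1, ihr h.2]

theorem List.sum_map_pow_add_one {R : Type*} [Semiring R] (a : R) (l : List ℕ) :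
    ((l.map (· + 1)).map (a ^ ·)).sum = a * (l.map (a ^ ·)).sum := by
  simp only [List.map_map, Function.comp_def, pow_succ', List.sum_map_mul_left]

/-- Kraft equality for observable generation numbers: if the set of observed leaves is
nonempty, then the sum over observed leaves ℓ of 2^{-m̃(ℓ)} equals 1. -/
theorem sum_two_pow_neg_obsGen_eq_one (t : PTree) (h : t.hasObs = true) :
    ((t.obsGens).map (fun d => ((2:ℝ)⁻¹) ^ d)).sum = 1 := by
  induction t with
  | leaf o => simp_all [PTree.hasObs, PTree.obsGens]
  | node1 c ih => exact ih h
  | node2 l r ihl ihr =>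
    cases hl : l.hasObs <;> cases hr : r.hasObs
    · simp [PTree.hasObs, hl, hr] at h
    · simpa [PTree.obsGens, hl, PTree.obsGens_eq_nil_of_hasObs_eq_false hl] using ihr hr
    · simpa [PTree.obsGens, hr, PTree.obsGens_eq_nil_of_hasObs_eq_false hr] using ihl hl
    · simp only [PTree.obsGens, hl, hr, Bool.and_self, if_true, List.map_append,
        List.sum_map_pow_add_one, List.sum_append, ihl hl, ihr hr]
      norm_num
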